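/- The map sending a 2×2 density matrix D (with Bloch vector v) to P·D·P + (I−P)·D·(I−P), where P is the projection onto |θφ⟩, corresponds on Bloch vectors to the orthogonal projection v ↦ (v · u(1,θ,φ))·u(1,θ,φ) in ℝ³. -/

import Mathlib

/-!
Write `P = (1 + S)/2` with `S = u·σ`. Then `P X P + (1 - P) X (1 - P) = (X + S X S)/2`, and the
anticommutation relation `(a·σ)(b·σ) + (b·σ)(a·σ) = 2 (a·b) I` gives `S² = I` and
`S (v·σ) S = 2 (u·v) S - v·σ` for a unit vector `u`: conjugation by `S` is the reflection of Bloch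
vectors in the axis `u`, and averaging a vector with its reflection projects it onto that axis.
-/

open Complex Matrix

/-- The Pauli matrices σ_x, σ_y, σ_z. -/
noncomputable def pauli : Fin 3 → Matrix (Fin 2) (Fin 2) ℂ :=
  ![!![0, 1; 1, 0], !![0, -Complex.I; Complex.I, 0], !![1, 0; 0, -1]]

/-- The matrix `(1/2)(I + v·σ)` with Bloch vector `v ∈ ℝ³`. -/
noncomputable def blochMat (v : Fin 3 → ℝ) : Matrix (Fin 2) (Fin 2) ℂ :=
  (1/2 : ℂ) • ((1 : Matrix (Fin 2) (Fin 2) ℂ) + ∑ i, (v i : ℂ) • pauli i)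

/-- The unit Bloch vector `u(1,θ,φ)`. -/
noncomputable def uVec (θ φ : ℝ) : Fin 3 → ℝ :=
  ![Real.sin θ * Real.cos φ, Real.sin θ * Real.sin φ, Real.cos θ]

def ludersMap {A : Type*} [Ring A] (P X : A) : A :=
  P * X * P + (1 - P) * X * (1 - P)

theorem ludersMap_half_one_add {𝕜 A : Type*} [Field 𝕜] [CharZero 𝕜] [Ring A] [Algebra 𝕜 A]
    (S X : A) :
    ludersMap ((1/2 : 𝕜) • (1 + S)) X = (1/2 : 𝕜) • (X + S * X * S) := by
  have h : (1 : A) - (1/2 : 𝕜) • (1 + S) = (1/2 : 𝕜) • (1 - S) := by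
    rw [smul_sub, smul_add]; module
  rw [ludersMap, h]
  simp only [smul_mul_assoc, mul_smul_comm, mul_add, add_mul, mul_sub, sub_mul, one_mul, mul_one]
  module

noncomputable def pauliDot (v : Fin 3 → ℝ) : Matrix (Fin 2) (Fin 2) ℂ :=
  ∑ i, (v i : ℂ) • pauli i

theorem blochMat_eq (v : Fin 3 → ℝ) : blochMat v = (1/2 : ℂ) • (1 + pauliDot v) := rfl

theorem pauliDot_smul (c : ℝ) (v : Fin 3 → ℝ) : pauliDot (c • v) = (c : ℂ) • pauliDot v := by
  simp only [pauliDot, Finset.smul_sum, smul_smul, Pi.smul_apply, smul_eq_mul, ofReal_mul]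

theorem pauliDot_mul_add_mul_swap (u v : Fin 3 → ℝ) :
    pauliDot u * pauliDot v + pauliDot v * pauliDot u = (2 * ((u ⬝ᵥ v : ℝ) : ℂ)) • 1 := by
  ext i j
  fin_cases i <;> fin_cases j <;>
    simp [pauliDot, pauli, dotProduct, Fin.sum_univ_succ] <;> ring_nf <;> simp [I_sq]

theorem pauliDot_mul_self (u : Fin 3 → ℝ) : pauliDot u * pauliDot u = ((u ⬝ᵥ u : ℝ) : ℂ) • 1 := by
  have h := pauliDot_mul_add_mul_swap u u
  rw [← two_smul ℂ (pauliDot u * pauliDot u), mul_smul] at h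
  exact smul_right_injective _ two_ne_zero h

theorem pauliDot_sandwich (u v : Fin 3 → ℝ) :
    pauliDot u * pauliDot v * pauliDot u
      = (2 * ((u ⬝ᵥ v : ℝ) : ℂ)) • pauliDot u - ((u ⬝ᵥ u : ℝ) : ℂ) • pauliDot v := by
  calc pauliDot u * pauliDot v * pauliDot u
      = (pauliDot u * pauliDot v + pauliDot v * pauliDot u) * pauliDot u
          - pauliDot v * (pauliDot u * pauliDot u) := by noncomm_ring
    _ = _ := by
      rw [pauliDot_mul_add_mul_swap, pauliDot_mul_self, smul_mul_assoc, mul_smul_comm]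
      simp only [one_mul, mul_one]

theorem ludersMap_blochMat {u : Fin 3 → ℝ} (hu : u ⬝ᵥ u = 1) (v : Fin 3 → ℝ) :
    ludersMap (blochMat u) (blochMat v) = blochMat ((v ⬝ᵥ u) • u) := by
  have hS : pauliDot u * pauliDot u = 1 := by rw [pauliDot_mul_self, hu]; simp
  rw [blochMat_eq u, ludersMap_half_one_add, blochMat_eq, blochMat_eq, pauliDot_smul,
    mul_smul_comm, smul_mul_assoc, mul_add, add_mul, mul_one, hS, pauliDot_sandwich, hu,
    dotProduct_comm]
  module

theorem dotProduct_uVec_self (θ φ : ℝ) : uVec θ φ ⬝ᵥ uVec θ φ = 1 := by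
  simp only [dotProduct, uVec, Fin.sum_univ_three, cons_val_zero, cons_val_one, cons_val]
  linear_combination Real.sin θ ^ 2 * Real.sin_sq_add_cos_sq φ + Real.sin_sq_add_cos_sq θ

theorem luders_is_bloch_projection_general (v : Fin 3 → ℝ) (θ φ : ℝ) :
    blochMat (uVec θ φ) * blochMat v * blochMat (uVec θ φ)
      + (1 - blochMat (uVec θ φ)) * blochMat v * (1 - blochMat (uVec θ φ))
      = blochMat ((∑ i, v i * uVec θ φ i) • uVec θ φ) :=
  ludersMap_blochMat (dotProduct_uVec_self θ φ) v

theorem luders_is_bloch_projection (v : Fin 3 → ℝ) (hv : ∑ i, v i ^ 2 ≤ 1) (θ φ : ℝ) :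
    blochMat (uVec θ φ) * blochMat v * blochMat (uVec θ φ)
      + (1 - blochMat (uVec θ φ)) * blochMat v * (1 - blochMat (uVec θ φ))
      = blochMat ((∑ i, v i * uVec θ φ i) • uVec θ φ) :=
  luders_is_bloch_projection_general v θ φ
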